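/- arXiv:2511.12172 — 5 statements merged into one kernel-verified Lean document; each statement's English description precedes it below -/
import Mathlib

section
/- Let K be a field and V a vector space over K. For all v, w ∈ V, the equality v ⊗ v = w ⊗ w holds in the tensor product V ⊗[K] V if and only if w = v or w = −v. -/
open TensorProduct

noncomputable def contr {K : Type*} [Field K] {V : Type*} [AddCommGroup V] [Module K V]
    (f : Module.Dual K V) : V ⊗[K] V →ₗ[K] V :=
  TensorProduct.lift ((LinearMap.lsmul K V).comp f)

@[simp] lemma contr_tmul {K : Type*} [Field K] {V : Type*} [AddCommGroup V] [Module K V]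
    (f : Module.Dual K V) (x y : V) : contr f (x ⊗ₜ[K] y) = f x • y := rfl

lemma tmul_self_eq_zero {K : Type*} [Field K] {V : Type*} [AddCommGroup V] [Module K V]
    {x : V} (h : (x ⊗ₜ[K] x : V ⊗[K] V) = 0) : x = 0 := by
  by_contra hx
  obtain ⟨f, hf⟩ : ∃ f : Module.Dual K V, f x ≠ 0 := by
    by_contra hc
    push_neg at hc
    exact hx ((Module.forall_dual_apply_eq_zero_iff K x).mp hc)
  have := congrArg (contr f) h
  simp at this
  rcases this with h1 | h1 <;> [exact hf h1; exact hx h1]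

/-- For vectors `v, w` in a vector space `V` over a field `K`, the tensor squares
`v ⊗ v` and `w ⊗ w` are equal in `V ⊗[K] V` if and only if `w = v` or `w = -v`. -/
theorem tmul_self_eq_tmul_self_iff (K : Type*) [Field K] (V : Type*) [AddCommGroup V]
    [Module K V] (v w : V) :
    (v ⊗ₜ[K] v : V ⊗[K] V) = w ⊗ₜ[K] w ↔ w = v ∨ w = -v := by
  constructor
  · intro h
    by_cases hv : v = 0
    · subst hv
      simp only [zero_tmul] at h
      left; exact (tmul_self_eq_zero h.symm)
    · obtain ⟨f, hf⟩ : ∃ f : Module.Dual K V, f v ≠ 0 := by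
        by_contra hc
        push_neg at hc
        exact hv ((Module.forall_dual_apply_eq_zero_iff K v).mp hc)
      have hv' := congrArg (contr f) h
      simp only [contr_tmul] at hv'
      -- f v • v = f w • w
      have hveq : v = ((f v)⁻¹ * f w) • w := by
        rw [mul_smul, ← hv', inv_smul_smul₀ hf]
      set a := (f v)⁻¹ * f w with ha
      have hw : w ≠ 0 := by
        rintro rfl
        exact hv (by simpa using hveq)
      have h2 : (a * a - 1) • (w ⊗ₜ[K] w : V ⊗[K] V) = 0 := by
        rw [sub_smul, one_smul, sub_eq_zero, mul_smul]
        rw [hveq] at h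
        simpa [smul_tmul, tmul_smul, smul_smul] using h
      have hww : (w ⊗ₜ[K] w : V ⊗[K] V) ≠ 0 := fun hz => hw (tmul_self_eq_zero hz)
      have ha2 : a * a = 1 := by
        rcases smul_eq_zero.mp h2 with h3 | h3
        · exact sub_eq_zero.mp h3
        · exact absurd h3 hww
      have : a = 1 ∨ a = -1 := by
        have := mul_self_eq_one_iff.mp ha2
        exact this
      rcases this with h1 | h1 <;> rw [h1] at hveq
      · left; rw [hveq, one_smul]
      · right; rw [hveq, neg_one_smul, neg_neg]
  · rintro (rfl | rfl)
    · rfl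
    · simp [tmul_neg, neg_tmul]
end

section
/- Let M₁ be the 4×4 complex antisymmetric matrix with rows [[0,i,0,0],[−i,0,0,0],[0,0,0,i],[0,0,−i,0]] (the matrix of the 2-form ω₁ = i e₁∧e₂ + i e₃∧e₄ on ℂ⁴). Then a matrix U in the special unitary group SU(4) = Matrix.specialUnitaryGroup (Fin 4) ℂ satisfies Uᵀ * M₁ * U = M₁ if and only if each of its four 2×2 blocks is of quaternionic form; that is, if and only if for all i, j ∈ {1, 2} there exist z, w ∈ ℂ with U₍₂ᵢ₋₁,₂ⱼ₋₁₎ = z, U₍₂ᵢ₋₁,₂ⱼ₎ = −conj(w), U₍₂ᵢ,₂ⱼ₋₁₎ = w, U₍₂ᵢ,₂ⱼ₎ = conj(z). (This subgroup of SU(4) is the image of the compact symplectic group Sp(2) under the exceptional isomorphism Spin 5 ≅ Sp 2 realized inside Spin 6 ≅ SU 4 as the stabilizer of ω₁.) -/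
open Matrix Complex

/-- The matrix of the 2-form `ω₁ = i e₁∧e₂ + i e₃∧e₄` on `ℂ⁴`. -/
noncomputable def M₁ : Matrix (Fin 4) (Fin 4) ℂ :=
  !![0, I, 0, 0; -I, 0, 0, 0; 0, 0, 0, I; 0, 0, -I, 0]

/-- The index of the `r`-th row (or column) of the `i`-th `2 × 2` block of a
`4 × 4` matrix. -/
def blk (i r : Fin 2) : Fin 4 := ⟨2 * i.val + r.val, by omega⟩

/-- A matrix `U ∈ SU(4)` stabilizes the 2-form `ω₁ = i e₁∧e₂ + i e₃∧e₄` if and only if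
each of its four `2 × 2` blocks has quaternionic form `[[z, -conj w], [w, conj z]]`.
This stabilizer is the copy of `Sp(2) ≅ Spin 5` inside `SU(4) ≅ Spin 6`. -/
theorem stabilizer_omega1_eq_sp2 (U : Matrix (Fin 4) (Fin 4) ℂ)
    (hU : U ∈ Matrix.specialUnitaryGroup (Fin 4) ℂ) :
    Uᵀ * M₁ * U = M₁ ↔
      ∀ i j : Fin 2, ∃ z w : ℂ,
        U (blk i 0) (blk j 0) = z ∧
        U (blk i 0) (blk j 1) = -(starRingEnd ℂ) w ∧
        U (blk i 1) (blk j 0) = w ∧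
        U (blk i 1) (blk j 1) = (starRingEnd ℂ) z := by
  classical
  have h1 : U * Uᴴ = 1 := (Matrix.mem_unitaryGroup_iff.mp (Matrix.mem_specialUnitaryGroup_iff.mp hU).1)
  set J : Matrix (Fin 4) (Fin 4) ℂ := !![0,1,0,0;-1,0,0,0;0,0,0,1;0,0,-1,0] with hJ
  have hM : M₁ = (I : ℂ) • J := by
    ext a b
    fin_cases a <;> fin_cases b <;> simp [M₁, hJ, Matrix.vecHead, Matrix.vecTail]
  have hJT : Jᵀ = -J := by
    ext a b
    fin_cases a <;> fin_cases b <;> simp [hJ, Matrix.vecHead, Matrix.vecTail]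
  have step1 : (Uᵀ * M₁ * U = M₁) ↔ (Uᵀ * J * U = J) := by
    rw [hM, Matrix.mul_smul, Matrix.smul_mul]
    exact (smul_right_injective _ I_ne_zero).eq_iff
  have hct : (Uᴴ)ᵀ = U.map (starRingEnd ℂ) := by
    ext a b; simp [Matrix.conjTranspose_apply]
  have step2 : (Uᵀ * J * U = J) ↔ (J * U = U.map (starRingEnd ℂ) * J) := by
    constructor
    · intro h
      have h' : Uᵀ * J = J * Uᴴ := by
        have h2 := congrArg (· * Uᴴ) h
        simp only [Matrix.mul_assoc, h1, Matrix.mul_one] at h2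
        simpa [Matrix.mul_assoc] using h2
      have h'' := congrArg Matrix.transpose h'
      rw [Matrix.transpose_mul, Matrix.transpose_mul, hJT, hct,
        Matrix.neg_mul, Matrix.mul_neg] at h''
      have := neg_injective h''
      rw [← this]
      rfl
    · intro h
      have h'' : Jᵀ * U = (Uᴴ)ᵀ * Jᵀ := by
        rw [hJT, hct, Matrix.neg_mul, Matrix.mul_neg]
        exact congrArg Neg.neg h
      have h' : Uᵀ * J = J * Uᴴ := by
        have := congrArg Matrix.transpose h''
        simpa [Matrix.transpose_mul] using this
      calc Uᵀ * J * U = J * Uᴴ * U := by rw [h']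
      _ = J * (Uᴴ * U) := by rw [Matrix.mul_assoc]
      _ = J := by rw [mul_eq_one_comm.mp h1, mul_one]
  rw [step1, step2]
  constructor
  · intro h i j
    have e : ∀ a b : Fin 4, (J * U) a b = (U.map (starRingEnd ℂ) * J) a b := fun a b => by rw [h]
    fin_cases i <;> fin_cases j <;>
      refine ⟨U _ _, U _ _, rfl, ?_, rfl, ?_⟩
    · have := e 1 1
      simp [hJ, Matrix.mul_apply, Fin.sum_univ_four, blk, Matrix.vecHead, Matrix.vecTail] at this ⊢
      linear_combination -this
    · have := e 0 1
      simp [hJ, Matrix.mul_apply, Fin.sum_univ_four, blk, Matrix.vecHead, Matrix.vecTail] at this ⊢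
      linear_combination this
    · have := e 1 3
      simp [hJ, Matrix.mul_apply, Fin.sum_univ_four, blk, Matrix.vecHead, Matrix.vecTail] at this ⊢
      linear_combination -this
    · have := e 0 3
      simp [hJ, Matrix.mul_apply, Fin.sum_univ_four, blk, Matrix.vecHead, Matrix.vecTail] at this ⊢
      linear_combination this
    · have := e 3 1
      simp [hJ, Matrix.mul_apply, Fin.sum_univ_four, blk, Matrix.vecHead, Matrix.vecTail] at this ⊢
      linear_combination -this
    · have := e 2 1
      simp [hJ, Matrix.mul_apply, Fin.sum_univ_four, blk, Matrix.vecHead, Matrix.vecTail] at this ⊢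
      linear_combination this
    · have := e 3 3
      simp [hJ, Matrix.mul_apply, Fin.sum_univ_four, blk, Matrix.vecHead, Matrix.vecTail] at this ⊢
      linear_combination -this
    · have := e 2 3
      simp [hJ, Matrix.mul_apply, Fin.sum_univ_four, blk, Matrix.vecHead, Matrix.vecTail] at this ⊢
      linear_combination this
  · intro hq
    obtain ⟨z00, w00, a00, b00, c00, d00⟩ := hq 0 0
    obtain ⟨z01, w01, a01, b01, c01, d01⟩ := hq 0 1
    obtain ⟨z10, w10, a10, b10, c10, d10⟩ := hq 1 0
    obtain ⟨z11, w11, a11, b11, c11, d11⟩ := hq 1 1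
    have e0 : blk 0 0 = 0 := by decide
    have e1 : blk 0 1 = 1 := by decide
    have e2 : blk 1 0 = 2 := by decide
    have e3 : blk 1 1 = 3 := by decide
    simp only [e0, e1, e2, e3] at a00 b00 c00 d00 a01 b01 c01 d01 a10 b10 c10 d10 a11 b11 c11 d11
    ext a b
    fin_cases a <;> fin_cases b <;>
      simp [hJ, Matrix.mul_apply, Fin.sum_univ_four, Matrix.vecHead, Matrix.vecTail, a00, b00, c00, d00, a01, b01, c01, d01,
        a10, b10, c10, d10, a11, b11, c11, d11]
end

section
/- Let M₁ and M₂ be the 4×4 complex antisymmetric matrices with rows [[0,i,0,0],[−i,0,0,0],[0,0,0,i],[0,0,−i,0]] and [[0,1,0,0],[−1,0,0,0],[0,0,0,−1],[0,0,1,0]] respectively (the matrices of the 2-forms ω₁ = i e₁∧e₂ + i e₃∧e₄ and ω₂ = e₁∧e₂ − e₃∧e₄ on ℂ⁴). Then a matrix U ∈ SU(4) = Matrix.specialUnitaryGroup (Fin 4) ℂ satisfies both Uᵀ * M₁ * U = M₁ and Uᵀ * M₂ * U = M₂ if and only if U is the block-diagonal matrix diag(A₁, A₂) for some A₁, A₂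 ∈ SU(2) = Matrix.specialUnitaryGroup (Fin 2) ℂ, i.e. U = Matrix.fromBlocks A₁ 0 0 A₂ with A₁, A₂ ∈ SU(2). (This subgroup is the stabilizer of ω₁ and ω₂ in SU(4) and realizes the exceptional isomorphism Spin 4 ≅ Sp 1 × Sp 1.) -/
open Matrix Complex

/-- The matrix of the 2-form `ω₂ = e₁∧e₂ − e₃∧e₄` on `ℂ⁴`. -/
noncomputable def M₂ : Matrix (Fin 4) (Fin 4) ℂ :=
  !![0, 1, 0, 0; -1, 0, 0, 0; 0, 0, 0, -1; 0, 0, 1, 0]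

lemma M1_sq : M₁ * M₁ = 1 := by
  ext i j
  fin_cases i <;> fin_cases j <;>
    simp [M₁, Matrix.mul_apply, Fin.sum_univ_four, Matrix.one_apply, Complex.I_mul_I,
      Matrix.vecHead, Matrix.vecTail]

lemma M1M2 : M₁ * M₂ = !![-I,0,0,0; 0,-I,0,0; 0,0,I,0; 0,0,0,I] := by
  ext i j
  fin_cases i <;> fin_cases j <;>
    simp [M₁, M₂, Matrix.mul_apply, Fin.sum_univ_four, Matrix.vecHead, Matrix.vecTail]

lemma reindex_blocks (A B C D : Matrix (Fin 2) (Fin 2) ℂ) :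
    Matrix.reindex finSumFinEquiv finSumFinEquiv (Matrix.fromBlocks A B C D) =
    !![A 0 0, A 0 1, B 0 0, B 0 1;
       A 1 0, A 1 1, B 1 0, B 1 1;
       C 0 0, C 0 1, D 0 0, D 0 1;
       C 1 0, C 1 1, D 1 0, D 1 1] := by
  ext i j
  fin_cases i <;> fin_cases j <;>
    simp [Matrix.reindex_apply, Matrix.submatrix_apply, finSumFinEquiv, Fin.addCases,
      Fin.subNat] <;> rfl

set_option maxHeartbeats 2000000 in
/-- A matrix `U ∈ SU(4)` stabilizes both 2-forms `ω₁ = i e₁∧e₂ + i e₃∧e₄` and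
`ω₂ = e₁∧e₂ − e₃∧e₄` if and only if it is block diagonal `diag(A₁, A₂)` with
`A₁, A₂ ∈ SU(2)`.  This stabilizer realizes `Spin 4 ≅ Sp 1 × Sp 1`. -/
theorem stabilizer_omega1_omega2_eq_su2_prod_su2 (U : Matrix (Fin 4) (Fin 4) ℂ)
    (hU : U ∈ Matrix.specialUnitaryGroup (Fin 4) ℂ) :
    (Uᵀ * M₁ * U = M₁ ∧ Uᵀ * M₂ * U = M₂) ↔
      ∃ A₁ A₂ : Matrix (Fin 2) (Fin 2) ℂ,
        A₁ ∈ Matrix.specialUnitaryGroup (Fin 2) ℂ ∧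
        A₂ ∈ Matrix.specialUnitaryGroup (Fin 2) ℂ ∧
        U = Matrix.reindex finSumFinEquiv finSumFinEquiv (Matrix.fromBlocks A₁ 0 0 A₂) := by
  constructor
  · rintro ⟨h1, h2⟩
    have e1 : Uᵀ * (M₁ * U * M₁) = 1 := by
      have h : Uᵀ * (M₁ * U * M₁) = (Uᵀ * M₁ * U) * M₁ := by noncomm_ring
      rw [h, h1, M1_sq]
    have e1' : (M₁ * U * M₁) * Uᵀ = 1 := mul_eq_one_comm.mp e1
    have e2 : M₁ * U * M₁ * M₂ = M₂ * U := by
      calc M₁ * U * M₁ * M₂ = M₁ * U * M₁ * (Uᵀ * M₂ * U) := by rw [h2]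
        _ = ((M₁ * U * M₁) * Uᵀ) * (M₂ * U) := by noncomm_ring
        _ = M₂ * U := by rw [e1', one_mul]
    have hcomm : M₁ * M₂ * U = U * (M₁ * M₂) := by
      calc M₁ * M₂ * U = M₁ * (M₂ * U) := by noncomm_ring
        _ = M₁ * (M₁ * U * M₁ * M₂) := by rw [e2]
        _ = (M₁ * M₁) * (U * (M₁ * M₂)) := by noncomm_ring
        _ = U * (M₁ * M₂) := by rw [M1_sq, one_mul]
    have h02 : U 0 2 = 0 := by
      have h := congrFun (congrFun hcomm 0) 2
      simp [M1M2, Matrix.mul_apply, Fin.sum_univ_four, Matrix.vecHead, Matrix.vecTail] at h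
      linear_combination (I/2) * h + U 0 2 * Complex.I_mul_I
    have h03 : U 0 3 = 0 := by
      have h := congrFun (congrFun hcomm 0) 3
      simp [M1M2, Matrix.mul_apply, Fin.sum_univ_four, Matrix.vecHead, Matrix.vecTail] at h
      linear_combination (I/2) * h + U 0 3 * Complex.I_mul_I
    have h12 : U 1 2 = 0 := by
      have h := congrFun (congrFun hcomm 1) 2
      simp [M1M2, Matrix.mul_apply, Fin.sum_univ_four, Matrix.vecHead, Matrix.vecTail] at h
      linear_combination (I/2) * h + U 1 2 * Complex.I_mul_I
    have h13 : U 1 3 = 0 := by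
      have h := congrFun (congrFun hcomm 1) 3
      simp [M1M2, Matrix.mul_apply, Fin.sum_univ_four, Matrix.vecHead, Matrix.vecTail] at h
      linear_combination (I/2) * h + U 1 3 * Complex.I_mul_I
    have h20 : U 2 0 = 0 := by
      have h := congrFun (congrFun hcomm 2) 0
      simp [M1M2, Matrix.mul_apply, Fin.sum_univ_four, Matrix.vecHead, Matrix.vecTail] at h
      linear_combination (-I/2) * h + U 2 0 * Complex.I_mul_I
    have h21 : U 2 1 = 0 := by
      have h := congrFun (congrFun hcomm 2) 1
      simp [M1M2, Matrix.mul_apply, Fin.sum_univ_four, Matrix.vecHead, Matrix.vecTail] at h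
      linear_combination (-I/2) * h + U 2 1 * Complex.I_mul_I
    have h30 : U 3 0 = 0 := by
      have h := congrFun (congrFun hcomm 3) 0
      simp [M1M2, Matrix.mul_apply, Fin.sum_univ_four, Matrix.vecHead, Matrix.vecTail] at h
      linear_combination (-I/2) * h + U 3 0 * Complex.I_mul_I
    have h31 : U 3 1 = 0 := by
      have h := congrFun (congrFun hcomm 3) 1
      simp [M1M2, Matrix.mul_apply, Fin.sum_univ_four, Matrix.vecHead, Matrix.vecTail] at h
      linear_combination (-I/2) * h + U 3 1 * Complex.I_mul_I
    have hU' := Matrix.mem_specialUnitaryGroup_iff.mp hU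
    have hu : star U * U = 1 := Matrix.mem_unitaryGroup_iff'.mp hU'.1
    refine ⟨!![U 0 0, U 0 1; U 1 0, U 1 1], !![U 2 2, U 2 3; U 3 2, U 3 3], ?_, ?_, ?_⟩
    · rw [Matrix.mem_specialUnitaryGroup_iff]
      constructor
      · rw [Matrix.mem_unitaryGroup_iff']
        ext i j
        fin_cases i <;> fin_cases j
        · have h := congrFun (congrFun hu 0) 0
          simp [Matrix.mul_apply, Fin.sum_univ_four, Fin.sum_univ_two, Matrix.star_apply,
            Matrix.one_apply, h20, h30] at h ⊢
          linear_combination h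
        · have h := congrFun (congrFun hu 0) 1
          simp [Matrix.mul_apply, Fin.sum_univ_four, Fin.sum_univ_two, Matrix.star_apply,
            Matrix.one_apply, h20, h21, h30, h31] at h ⊢
          linear_combination h
        · have h := congrFun (congrFun hu 1) 0
          simp [Matrix.mul_apply, Fin.sum_univ_four, Fin.sum_univ_two, Matrix.star_apply,
            Matrix.one_apply, h20, h21, h30, h31] at h ⊢
          linear_combination h
        · have h := congrFun (congrFun hu 1) 1
          simp [Matrix.mul_apply, Fin.sum_univ_four, Fin.sum_univ_two, Matrix.star_apply,
            Matrix.one_apply, h21, h31] at h ⊢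
          linear_combination h
      · rw [Matrix.det_fin_two_of]
        have hd := congrFun (congrFun h1 0) 1
        simp [M₁, Matrix.mul_apply, Fin.sum_univ_four, Matrix.transpose_apply, h20, h30,
          Matrix.vecHead, Matrix.vecTail] at hd
        linear_combination (-I) * hd + (U 0 0 * U 1 1 - U 0 1 * U 1 0 - 1) * Complex.I_mul_I
    · rw [Matrix.mem_specialUnitaryGroup_iff]
      constructor
      · rw [Matrix.mem_unitaryGroup_iff']
        ext i j
        fin_cases i <;> fin_cases j
        · have h := congrFun (congrFun hu 2) 2
          simp [Matrix.mul_apply, Fin.sum_univ_four, Fin.sum_univ_two, Matrix.star_apply,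
            Matrix.one_apply, h02, h12] at h ⊢
          linear_combination h
        · have h := congrFun (congrFun hu 2) 3
          simp [Matrix.mul_apply, Fin.sum_univ_four, Fin.sum_univ_two, Matrix.star_apply,
            Matrix.one_apply, h02, h03, h12, h13] at h ⊢
          linear_combination h
        · have h := congrFun (congrFun hu 3) 2
          simp [Matrix.mul_apply, Fin.sum_univ_four, Fin.sum_univ_two, Matrix.star_apply,
            Matrix.one_apply, h02, h03, h12, h13] at h ⊢
          linear_combination h
        · have h := congrFun (congrFun hu 3) 3
          simp [Matrix.mul_apply, Fin.sum_univ_four, Fin.sum_univ_two, Matrix.star_apply,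
            Matrix.one_apply, h03, h13] at h ⊢
          linear_combination h
      · rw [Matrix.det_fin_two_of]
        have hd := congrFun (congrFun h1 2) 3
        simp [M₁, Matrix.mul_apply, Fin.sum_univ_four, Matrix.transpose_apply, h02, h12,
          Matrix.vecHead, Matrix.vecTail] at hd
        linear_combination (-I) * hd + (U 2 2 * U 3 3 - U 2 3 * U 3 2 - 1) * Complex.I_mul_I
    · rw [reindex_blocks]
      ext i j
      fin_cases i <;> fin_cases j <;>
        simp [h02, h03, h12, h13, h20, h21, h30, h31, Matrix.vecHead, Matrix.vecTail]
  · rintro ⟨A₁, A₂, hA1, hA2, rfl⟩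
    have hd1 : A₁ 0 0 * A₁ 1 1 - A₁ 0 1 * A₁ 1 0 = 1 := by
      have h := (Matrix.mem_specialUnitaryGroup_iff.mp hA1).2
      rwa [Matrix.det_fin_two] at h
    have hd2 : A₂ 0 0 * A₂ 1 1 - A₂ 0 1 * A₂ 1 0 = 1 := by
      have h := (Matrix.mem_specialUnitaryGroup_iff.mp hA2).2
      rwa [Matrix.det_fin_two] at h
    rw [reindex_blocks]
    constructor <;>
    · ext i j
      fin_cases i <;> fin_cases j <;>
        simp [M₁, M₂, Matrix.mul_apply, Fin.sum_univ_four, Matrix.transpose_apply,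
          Matrix.vecHead, Matrix.vecTail]
      all_goals try ring1
      all_goals try linear_combination I * hd1
      all_goals try linear_combination (-I) * hd1
      all_goals try linear_combination I * hd2
      all_goals try linear_combination (-I) * hd2
      all_goals try linear_combination hd1
      all_goals try linear_combination (-1 : ℂ) * hd1
      all_goals try linear_combination hd2
      all_goals try linear_combination (-1 : ℂ) * hd2
end

section
/- Let M₁, M₃, M₄, M₅ be the 4×4 complex antisymmetric matrices with rows [[0,i,0,0],[−i,0,0,0],[0,0,0,i],[0,0,−i,0]], [[0,0,i,0],[0,0,0,−i],[−i,0,0,0],[0,i,0,0]], [[0,0,1,0],[0,0,0,1],[−1,0,0,0],[0,−1,0,0]], and [[0,0,0,i],[0,0,i,0],[0,−i,0,0],[−i,0,0,0]] respectively (the matrices of the 2-forms ω₁ = i e₁∧e₂ + i e₃∧e₄, ω₃ = i e₁∧e₃ − i e₂∧e₄, ω₄ = e₁∧e₃ + e₂∧e₄, ω₅ = i e₁∧e₄ + i e₂∧e₃ on ℂ⁴). Then a matrix U ∈ SU(4) = Matrix.specialUnitaryGroup (Fin 4) ℂ satisfies Uᵀ * Mᵢ * U = Mᵢ for all i ∈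 {1, 3, 4, 5} if and only if there exist real numbers a, b with a² + b² = 1 such that U is the matrix with rows [[a,0,−b,0],[0,a,0,−b],[b,0,a,0],[0,b,0,a]] (i.e. the block matrix [[a·I₂, −b·I₂],[b·I₂, a·I₂]]). (This stabilizer subgroup of SU(4) is a circle group realizing Spin 2.) -/
/-!
`M₄` is real, with `M₄ * M₄ = -1` and `M₄ᵀ = -M₄`, and it commutes with `M₁`, `M₃`, `M₅`.
So for real `a² + b² = 1` the transpose of `a - b M₄` is `a + b M₄`, and
`(a + b M₄) M (a - b M₄) = (a² + b²) M = M` for each of the four forms. Conversely, for unitary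
`U` the inverse of `Uᵀ` is `Ū`, so `Uᵀ M U = M` becomes `M U = Ū M`, a real-linear condition on
the entries of `U`. For the four forms these conditions leave only `U = a - b M₄` with `a, b`
real, and then `Uᴴ U = (a + b M₄)(a - b M₄) = (a² + b²) • 1` forces `a² + b² = 1`.
-/

open Matrix Complex

/-- The matrix of the 2-form `ω₃ = i e₁∧e₃ − i e₂∧e₄` on `ℂ⁴`. -/
noncomputable def M₃ : Matrix (Fin 4) (Fin 4) ℂ :=
  !![0, 0, I, 0; 0, 0, 0, -I; -I, 0, 0, 0; 0, I, 0, 0]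

/-- The matrix of the 2-form `ω₄ = e₁∧e₃ + e₂∧e₄` on `ℂ⁴`. -/
noncomputable def M₄ : Matrix (Fin 4) (Fin 4) ℂ :=
  !![0, 0, 1, 0; 0, 0, 0, 1; -1, 0, 0, 0; 0, -1, 0, 0]

/-- The matrix of the 2-form `ω₅ = i e₁∧e₄ + i e₂∧e₃` on `ℂ⁴`. -/
noncomputable def M₅ : Matrix (Fin 4) (Fin 4) ℂ :=
  !![0, 0, 0, I; 0, 0, I, 0; 0, -I, 0, 0; -I, 0, 0, 0]

section ComplexStructure

variable {n R : Type*} [Fintype n] [DecidableEq n] [CommRing R] {J : Matrix n n R}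

theorem smul_one_add_smul_mul_smul_one_sub_smul (hJ : J * J = -1) (a b : R) :
    (a • 1 + b • J) * (a • 1 - b • J) = (a ^ 2 + b ^ 2) • (1 : Matrix n n R) := by
  simp only [add_mul, mul_sub, smul_mul_smul_comm, one_mul, mul_one, hJ, mul_comm b a]
  module

theorem transpose_mul_mul_eq_of_commute (hJ : J * J = -1) (hJt : Jᵀ = -J)
    {M : Matrix n n R} (hM : Commute M J) {a b : R} (hab : a ^ 2 + b ^ 2 = 1) :
    (a • 1 - b • J)ᵀ * M * (a • 1 - b • J) = M := by
  have hT : (a • 1 - b • J)ᵀ = a • 1 + b • J := by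
    rw [transpose_sub, transpose_smul, transpose_smul, transpose_one, hJt, smul_neg,
      sub_neg_eq_add]
  have hcomm : Commute (a • 1 + b • J) M :=
    ((Commute.one_left M).smul_left a).add_left (hM.symm.smul_left b)
  rw [hT, hcomm.eq, Matrix.mul_assoc, smul_one_add_smul_mul_smul_one_sub_smul hJ, hab,
    one_smul, Matrix.mul_one]

end ComplexStructure

theorem sq_add_sq_eq_one_of_smul_one_sub_smul_mem_unitaryGroup {n : Type*} [Fintype n]
    [DecidableEq n] [Nonempty n] {J : Matrix n n ℂ} (hJ : J * J = -1) (hJh : Jᴴ = -J)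
    {a b : ℝ} (hU : (a : ℂ) • 1 - (b : ℂ) • J ∈ unitaryGroup n ℂ) : a ^ 2 + b ^ 2 = 1 := by
  have hstar : star ((a : ℂ) • 1 - (b : ℂ) • J) = (a : ℂ) • 1 + (b : ℂ) • J := by
    rw [star_sub, star_smul, star_smul, star_one, star_eq_conjTranspose, hJh, smul_neg,
      sub_neg_eq_add, Complex.star_def, Complex.conj_ofReal, Complex.conj_ofReal]
  have h := mem_unitaryGroup_iff'.mp hU
  rw [hstar, smul_one_add_smul_mul_smul_one_sub_smul hJ] at h
  obtain ⟨i⟩ := ‹Nonempty n›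
  have hii := congrFun (congrFun h i) i
  simp only [Matrix.smul_apply, one_apply_eq, smul_eq_mul, mul_one] at hii
  exact_mod_cast hii

theorem mul_eq_map_star_mul_of_transpose_mul_mul_eq {n α : Type*} [Fintype n] [DecidableEq n]
    [CommRing α] [StarRing α] {U M : Matrix n n α} (hU : U ∈ unitaryGroup n α)
    (h : Uᵀ * M * U = M) : M * U = U.map star * M := by
  have hUt : star Uᵀ * Uᵀ = 1 :=
    mem_unitaryGroup_iff'.mp (transpose_mem_unitaryGroup_iff.mpr hU)
  calc M * U = star Uᵀ * Uᵀ * (M * U) := by rw [hUt, one_mul]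
    _ = U.map star * (Uᵀ * M * U) := by simp only [Matrix.mul_assoc]; rfl
    _ = U.map star * M := by rw [h]

theorem M₄_mul_self : M₄ * M₄ = -1 := by
  ext i j
  fin_cases i <;> fin_cases j <;> simp [M₄, mul_apply, Fin.sum_univ_four, one_apply]

theorem M₄_transpose : M₄ᵀ = -M₄ := by
  ext i j
  fin_cases i <;> fin_cases j <;> simp [M₄]

theorem M₄_conjTranspose : M₄ᴴ = -M₄ := by
  ext i j
  fin_cases i <;> fin_cases j <;> simp [M₄]

theorem commute_M₁_M₄ : Commute M₁ M₄ := by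
  ext i j
  fin_cases i <;> fin_cases j <;> simp [M₁, M₄, mul_apply, Fin.sum_univ_four]

theorem commute_M₃_M₄ : Commute M₃ M₄ := by
  ext i j
  fin_cases i <;> fin_cases j <;> simp [M₃, M₄, mul_apply, Fin.sum_univ_four]

theorem commute_M₅_M₄ : Commute M₅ M₄ := by
  ext i j
  fin_cases i <;> fin_cases j <;> simp [M₅, M₄, mul_apply, Fin.sum_univ_four]

theorem smul_one_sub_smul_M₄_eq (a b : ℝ) :
    (a : ℂ) • 1 - (b : ℂ) • M₄ =
      !![(a : ℂ), 0, -(b : ℂ), 0;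
         0, (a : ℂ), 0, -(b : ℂ);
         (b : ℂ), 0, (a : ℂ), 0;
         0, (b : ℂ), 0, (a : ℂ)] := by
  ext i j
  fin_cases i <;> fin_cases j <;> simp [M₄, one_apply]

theorem exists_eq_smul_one_sub_smul_M₄ {V : Matrix (Fin 4) (Fin 4) ℂ}
    (h₁ : M₁ * V = V.map star * M₁) (h₃ : M₃ * V = V.map star * M₃)
    (h₄ : M₄ * V = V.map star * M₄) (h₅ : M₅ * V = V.map star * M₅) :
    ∃ a b : ℝ, V = (a : ℂ) • 1 - (b : ℂ) • M₄ := by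
  refine ⟨(V 0 0).re, (V 2 0).re, ?_⟩
  rw [← Matrix.ext_iff] at h₁ h₃ h₄ h₅
  simp [Fin.forall_fin_succ, mul_apply, Fin.sum_univ_four, M₁, M₃, M₄, M₅,
    Complex.ext_iff] at h₁ h₃ h₄ h₅
  rw [smul_one_sub_smul_M₄_eq]
  ext i j
  fin_cases i <;> fin_cases j <;> simp [Complex.ext_iff] <;> grind

/-- A matrix `U ∈ SU(4)` stabilizes the four 2-forms `ω₁, ω₃, ω₄, ω₅` if and only if it
has the form `[[a·I₂, −b·I₂], [b·I₂, a·I₂]]` for some real `a, b` with `a² + b² = 1`.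
This stabilizer is a circle group realizing `Spin 2`. -/
theorem stabilizer_omega1345_eq_circle (U : Matrix (Fin 4) (Fin 4) ℂ)
    (hU : U ∈ Matrix.specialUnitaryGroup (Fin 4) ℂ) :
    (Uᵀ * M₁ * U = M₁ ∧ Uᵀ * M₃ * U = M₃ ∧ Uᵀ * M₄ * U = M₄ ∧ Uᵀ * M₅ * U = M₅) ↔
      ∃ a b : ℝ, a ^ 2 + b ^ 2 = 1 ∧
        U = !![(a : ℂ), 0, -(b : ℂ), 0;
               0, (a : ℂ), 0, -(b : ℂ);
               (b : ℂ), 0, (a : ℂ), 0;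
               0, (b : ℂ), 0, (a : ℂ)] := by
  have hUu : U ∈ unitaryGroup (Fin 4) ℂ := (mem_specialUnitaryGroup_iff.mp hU).1
  constructor
  · rintro ⟨h₁, h₃, h₄, h₅⟩
    have intertwine := fun {M} (h : Uᵀ * M * U = M) ↦
      mul_eq_map_star_mul_of_transpose_mul_mul_eq hUu h
    obtain ⟨a, b, rfl⟩ := exists_eq_smul_one_sub_smul_M₄
      (intertwine h₁) (intertwine h₃) (intertwine h₄) (intertwine h₅)
    exact ⟨a, b, sq_add_sq_eq_one_of_smul_one_sub_smul_mem_unitaryGroup M₄_mul_self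
      M₄_conjTranspose hUu, smul_one_sub_smul_M₄_eq a b⟩
  · rintro ⟨a, b, hab, rfl⟩
    have hab' : (a : ℂ) ^ 2 + (b : ℂ) ^ 2 = 1 := by exact_mod_cast hab
    have preserves := fun {M} (hM : Commute M M₄) ↦
      transpose_mul_mul_eq_of_commute M₄_mul_self M₄_transpose hM hab'
    rw [← smul_one_sub_smul_M₄_eq]
    exact ⟨preserves commute_M₁_M₄, preserves commute_M₃_M₄, preserves (Commute.refl M₄),
      preserves commute_M₅_M₄⟩
end

section
/- Let M₁ be the 4×4 complex antisymmetric matrix with rows [[0,i,0,0],[−i,0,0,0],[0,0,0,i],[0,0,−i,0]]. For A ∈ SU(2) = Matrix.specialUnitaryGroup (Fin 2) ℂ and B ∈ SO(2) (i.e. a real 2×2 matrix B = [[a,−b],[b,a]] with a² + b² = 1, viewed as a complex matrix), let B ⊗ A denote the Kronecker product, i.e. the 4×4 complex matrix whose 2×2 block in block position (i,j) is Bᵢⱼ · A. Then for every such A and B, the matrix B ⊗ A lies in SU(4) = Matrix.specialUnitaryGroup (Fin 4) ℂ and satisfies (B ⊗ A)ᵀ * M₁ * (B ⊗ A) = M₁;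 moreover the assignment (A, B) ↦ B ⊗ A is a group homomorphism from SU(2) × SO(2) into the subgroup {U ∈ SU(4) : Uᵀ * M₁ * U = M₁}. (This is the paper's claim that the lift Spin 3 × Spin 2 → Spin 5 ≅ Sp 2 of the inclusion SO 3 × SO 2 → SO 5 is given by the Kronecker product of matrices, used in the proof of the tensor lemma.) -/
open Matrix Complex

/-- The Kronecker product `B ⊗ A` of two `2 × 2` complex matrices, as a `4 × 4` complex
matrix: its `2 × 2` block in block position `(i, j)` is `B i j • A`, i.e. its
`(2i + r, 2j + s)` entry is `B i j * A r s`. -/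
noncomputable def kron (B A : Matrix (Fin 2) (Fin 2) ℂ) : Matrix (Fin 4) (Fin 4) ℂ :=
  Matrix.reindex finProdFinEquiv finProdFinEquiv (Matrix.kroneckerMap (· * ·) B A)

/-- The `2 × 2` rotation matrix `[[a, -b], [b, a]] ∈ SO(2)`, viewed as a complex matrix. -/
noncomputable def so2 (a b : ℝ) : Matrix (Fin 2) (Fin 2) ℂ :=
  !![(a : ℂ), -(b : ℂ); (b : ℂ), (a : ℂ)]

private lemma kron_mul (B₁ B₂ A₁ A₂ : Matrix (Fin 2) (Fin 2) ℂ) :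
    kron (B₁ * B₂) (A₁ * A₂) = kron B₁ A₁ * kron B₂ A₂ := by
  unfold kron
  rw [reindex_apply, reindex_apply, reindex_apply, submatrix_mul_equiv,
    ← Matrix.mul_kronecker_mul]

private lemma kron_one : kron 1 1 = 1 := by
  unfold kron
  rw [Matrix.one_kronecker_one, reindex_apply, submatrix_one_equiv]

private lemma kron_transpose (B A : Matrix (Fin 2) (Fin 2) ℂ) :
    (kron B A)ᵀ = kron Bᵀ Aᵀ := by
  ext i j
  simp [kron]

private lemma kron_conjTranspose (B A : Matrix (Fin 2) (Fin 2) ℂ) :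
    (kron B A)ᴴ = kron Bᴴ Aᴴ := by
  ext i j
  simp [kron, conjTranspose_apply, mul_comm]

private lemma kron_det (B A : Matrix (Fin 2) (Fin 2) ℂ) :
    (kron B A).det = B.det ^ 2 * A.det ^ 2 := by
  unfold kron
  rw [det_reindex_self]
  exact Matrix.det_kronecker B A

private def Jm : Matrix (Fin 2) (Fin 2) ℂ := !![0, I; -I, 0]

private lemma M₁_eq : M₁ = kron 1 Jm := by
  ext i j
  fin_cases i <;> fin_cases j <;>
    norm_num [M₁, kron, Jm, finProdFinEquiv, Fin.divNat, Fin.modNat, Matrix.one_apply,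
      Fin.ext_iff]

private lemma symplectic (A : Matrix (Fin 2) (Fin 2) ℂ) (hA : A.det = 1) :
    Aᵀ * Jm * A = Jm := by
  obtain ⟨a, b, c, d, rfl⟩ : ∃ a b c d, A = !![a, b; c, d] :=
    ⟨_, _, _, _, Matrix.eta_fin_two A⟩
  rw [Matrix.det_fin_two_of] at hA
  ext i j
  fin_cases i <;> fin_cases j <;>
      simp [Jm, Matrix.mul_apply, Fin.sum_univ_two, Matrix.transpose_apply,
        Matrix.vecHead, Matrix.vecTail] <;>
    first
      | ring1!
      | linear_combination (norm := ring1!) I * hA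
      | linear_combination (norm := ring1!) -I * hA

private lemma so2_transpose (a b : ℝ) :
    (so2 a b)ᵀ = !![(a : ℂ), (b : ℂ); -(b : ℂ), (a : ℂ)] := by
  ext i j
  fin_cases i <;> fin_cases j <;> simp [so2]

private lemma so2_transpose_mul (a b : ℝ) (h : a ^ 2 + b ^ 2 = 1) :
    (so2 a b)ᵀ * so2 a b = 1 := by
  have h' : (a : ℂ) ^ 2 + (b : ℂ) ^ 2 = 1 := by
    exact_mod_cast h
  rw [so2_transpose]
  ext i j
  fin_cases i <;> fin_cases j <;>
      simp [so2, Matrix.mul_apply, Fin.sum_univ_two, Matrix.one_apply] <;>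
    first
      | ring1!
      | linear_combination (norm := ring1!) h'

private lemma so2_conjTranspose (a b : ℝ) : (so2 a b)ᴴ = (so2 a b)ᵀ := by
  ext i j
  fin_cases i <;> fin_cases j <;> simp [so2]

private lemma so2_det (a b : ℝ) (h : a ^ 2 + b ^ 2 = 1) : (so2 a b).det = 1 := by
  have h' : (a : ℂ) ^ 2 + (b : ℂ) ^ 2 = 1 := by exact_mod_cast congrArg (Complex.ofReal) h
  rw [Matrix.det_fin_two]
  simp [so2]
  linear_combination (norm := ring1!) h'

private lemma so2_one : so2 1 0 = 1 := by
  ext i j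
  fin_cases i <;> fin_cases j <;> simp [so2, Matrix.one_apply]

/-- For `A ∈ SU(2)` and `B ∈ SO(2)`, the Kronecker product `B ⊗ A` lies in `SU(4)` and
stabilizes the 2-form `ω₁ = i e₁∧e₂ + i e₃∧e₄`; moreover `(A, B) ↦ B ⊗ A` is a group
homomorphism from `SU(2) × SO(2)` into the stabilizer subgroup
`{U ∈ SU(4) : Uᵀ M₁ U = M₁} ≅ Sp(2)`.  This is the lift
`Spin 3 × Spin 2 → Spin 5 ≅ Sp 2` of the inclusion `SO 3 × SO 2 → SO 5`. -/
theorem kronecker_maps_su2_so2_into_sp2 :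
    (∀ A : Matrix (Fin 2) (Fin 2) ℂ, A ∈ Matrix.specialUnitaryGroup (Fin 2) ℂ →
      ∀ a b : ℝ, a ^ 2 + b ^ 2 = 1 →
        kron (so2 a b) A ∈ Matrix.specialUnitaryGroup (Fin 4) ℂ ∧
        (kron (so2 a b) A)ᵀ * M₁ * kron (so2 a b) A = M₁) ∧
    (∀ A₁ A₂ : Matrix (Fin 2) (Fin 2) ℂ,
      A₁ ∈ Matrix.specialUnitaryGroup (Fin 2) ℂ →
      A₂ ∈ Matrix.specialUnitaryGroup (Fin 2) ℂ →
      ∀ a₁ b₁ a₂ b₂ : ℝ, a₁ ^ 2 + b₁ ^ 2 = 1 → a₂ ^ 2 + b₂ ^ 2 = 1 →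
        kron (so2 a₁ b₁ * so2 a₂ b₂) (A₁ * A₂) =
          kron (so2 a₁ b₁) A₁ * kron (so2 a₂ b₂) A₂) ∧
    kron (so2 1 0) 1 = 1 := by
  refine ⟨?_, ?_, ?_⟩
  · intro A hA a b hab
    rw [Matrix.mem_specialUnitaryGroup_iff] at hA
    obtain ⟨hAu, hAd⟩ := hA
    rw [Matrix.mem_unitaryGroup_iff', Matrix.star_eq_conjTranspose] at hAu
    constructor
    · rw [Matrix.mem_specialUnitaryGroup_iff, Matrix.mem_unitaryGroup_iff']
      constructor
      · show (kron (so2 a b) A)ᴴ * kron (so2 a b) A = 1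
        rw [kron_conjTranspose, ← kron_mul, so2_conjTranspose, so2_transpose_mul a b hab]
        show kron 1 (Aᴴ * A) = 1
        rw [hAu, kron_one]
      · rw [kron_det, so2_det a b hab, hAd]
        ring
    · rw [M₁_eq, kron_transpose, ← kron_mul, ← kron_mul, Matrix.mul_one,
        so2_transpose_mul a b hab, symplectic A hAd]
  · intro A₁ A₂ _ _ a₁ b₁ a₂ b₂ _ _
    exact kron_mul _ _ _ _
  · rw [so2_one, kron_one]
end
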